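/- arXiv:2103.09137 — 5 statements merged into one kernel-verified Lean document; each statement's English description precedes it below -/
import Mathlib

section
/- Let ρ : X → Y be a continuous surjective map between compact Hausdorff spaces, let μ be a regular Borel probability measure on X, and let ν be the pushforward of μ along ρ. Assume ν({y}) = 0 for every y ∈ Y. Then for any Bernstein set Z ⊆ Y, the set ρ⁻¹(Z) is not measurable with respect to the completion of μ. -/
/-!
If `ρ⁻¹' Z` were `μ`-measurable, one of `ρ⁻¹' Z`, `ρ⁻¹' Zᶜ` would have positive measure, and by
inner regularity it would contain a compact set `K` of positive measure. Since `ρ_* μ` has no atoms,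
the compact image `ρ '' K` is uncountable, so it meets both `Z` and `Zᶜ` — impossible, as it lies in
one of them.
-/

open MeasureTheory Set

/-- A Bernstein set: both it and its complement meet every uncountable closed set. -/
def IsBernstein {Y : Type*} [TopologicalSpace Y] (Z : Set Y) : Prop :=
  ∀ C : Set Y, IsClosed C → ¬ C.Countable → (Z ∩ C).Nonempty ∧ (Zᶜ ∩ C).Nonempty

theorem IsBernstein.compl {Y : Type*} [TopologicalSpace Y] {Z : Set Y} (hZ : IsBernstein Z) :
    IsBernstein Zᶜ := fun C hC hCu => by
  rw [compl_compl]
  exact (hZ C hC hCu).symm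

section

variable {X Y : Type*} [MeasurableSpace X] [MeasurableSpace Y] {μ : Measure X} {ρ : X → Y}

theorem not_countable_image_of_measure_ne_zero (hρ : AEMeasurable ρ μ)
    [NullSingletonClass (μ.map ρ)] {K : Set X} (hK : μ K ≠ 0) : ¬ (ρ '' K).Countable :=
  fun hc => hK <| measure_mono_null (subset_preimage_image ρ K) <|
    le_zero_iff.1 <| (Measure.le_map_apply hρ _).trans_eq (hc.measure_zero _)

variable [TopologicalSpace X] [OpensMeasurableSpace X] [TopologicalSpace Y] [T2Space Y]
  [BorelSpace Y] [μ.InnerRegularCompactLTTop] [NullSingletonClass (μ.map ρ)]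
  {Z : Set Y}

theorem IsBernstein.measure_eq_zero_of_subset_preimage (hZ : IsBernstein Z) (hρ : Continuous ρ)
    {D : Set X} (hD : MeasurableSet D) (hD_ne_top : μ D ≠ ⊤) (hDZ : D ⊆ ρ ⁻¹' Z) : μ D = 0 := by
  by_contra hD0
  obtain ⟨K, hKD, hK, hK0⟩ :=
    hD.exists_lt_isCompact_of_ne_top hD_ne_top (pos_iff_ne_zero.2 hD0)
  obtain ⟨-, y, hyZ, x, hxK, rfl⟩ := hZ (ρ '' K) (hK.image hρ).isClosed
    (not_countable_image_of_measure_ne_zero hρ.aemeasurable hK0.ne')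
  exact hyZ (hDZ (hKD hxK))

theorem IsBernstein.measure_preimage_eq_zero [IsFiniteMeasure μ] (hZ : IsBernstein Z)
    (hρ : Continuous ρ) (h : NullMeasurableSet (ρ ⁻¹' Z) μ) : μ (ρ ⁻¹' Z) = 0 := by
  obtain ⟨D, hDZ, hD, hD_ae⟩ := h.exists_measurable_subset_ae_eq
  rw [← measure_congr hD_ae]
  exact hZ.measure_eq_zero_of_subset_preimage hρ hD (measure_ne_top μ D) hDZ

end

theorem stmt3_general {X Y : Type*} [TopologicalSpace X]
    [TopologicalSpace Y] [T2Space Y]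
    [MeasurableSpace X] [BorelSpace X] [MeasurableSpace Y] [BorelSpace Y]
    (ρ : X → Y) (hρ : Continuous ρ)
    (μ : Measure X) [IsProbabilityMeasure μ] [μ.Regular]
    (hnull : ∀ y : Y, Measure.map ρ μ {y} = 0)
    (Z : Set Y) (hZ : IsBernstein Z) :
    ¬ NullMeasurableSet (ρ ⁻¹' Z) μ := by
  intro h
  have : NullSingletonClass (μ.map ρ) := ⟨hnull⟩
  have hZ_null := hZ.measure_preimage_eq_zero hρ h
  have hZc_null := hZ.compl.measure_preimage_eq_zero hρ (preimage_compl ▸ h.compl)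
  have : μ univ = 0 := by
    rw [← preimage_univ (f := ρ), ← union_compl_self Z, preimage_union]
    exact measure_union_null hZ_null hZc_null
  simp at this

theorem stmt3 {X Y : Type*} [TopologicalSpace X] [CompactSpace X] [T2Space X]
    [TopologicalSpace Y] [CompactSpace Y] [T2Space Y]
    [MeasurableSpace X] [BorelSpace X] [MeasurableSpace Y] [BorelSpace Y]
    (ρ : X → Y) (hρ : Continuous ρ) (hsurj : Function.Surjective ρ)
    (μ : Measure X) [IsProbabilityMeasure μ] [μ.Regular]
    (hnull : ∀ y : Y, Measure.map ρ μ {y} = 0)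
    (Z : Set Y) (hZ : IsBernstein Z) :
    ¬ NullMeasurableSet (ρ ⁻¹' Z) μ :=
  stmt3_general ρ hρ μ hnull Z hZ
end

section
/- There exists a countably infinite set S ⊆ [0,1)^ℕ such that: (i) S has nonempty intersection with every cube in [0,1)^ℕ, and (ii) the map (a, n) ↦ a(n) from S × ℕ to [0,1) is injective. -/
/-!
Every cube contains a box with rational ends in finitely many coordinates and ends `0`, `1`
elsewhere, and there are only countably many such boxes `c`. Since the pairs `(c, n)` are
countable, one can pick the coordinates `a_c(n)` of a point `a_c` of each box `c` in pairwise
distinct cosets `ℚ + k √2`, `k ∈ ℕ`, of `ℚ` in `ℝ`; these cosets are dense and pairwise disjoint,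
which makes `(c, n) ↦ a_c(n)` injective.
-/

/-- A cube in `[0,1)^ℕ`: a product `∏ₙ [lₙ, uₙ)` with `0 ≤ lₙ < uₙ ≤ 1`,
and `lₙ = 0`, `uₙ = 1` for all but finitely many `n`. -/
def IsCube (C : Set (ℕ → ℝ)) : Prop :=
  ∃ l u : ℕ → ℝ, (∀ n, 0 ≤ l n ∧ l n < u n ∧ u n ≤ 1) ∧
    {n | ¬ (l n = 0 ∧ u n = 1)}.Finite ∧
    C = {a | ∀ n, a n ∈ Set.Ico (l n) (u n)}

open Set Function

lemma Irrational.natCast_eq_of_add_natCast_mul_eq {x : ℝ} (hx : Irrational x) {q q' : ℚ}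
    {m m' : ℕ} (h : q + m * x = q' + m' * x) : m = m' := by
  by_contra hne
  have hm : (m : ℤ) - m' ≠ 0 := sub_ne_zero.mpr (by exact_mod_cast hne)
  apply (hx.intCast_mul hm).ne_rat (q' - q)
  push_cast
  linarith

theorem exists_injective_forall_mem_Ioo {ι : Type*} [Countable ι] {l u : ι → ℝ}
    (hlu : ∀ i, l i < u i) : ∃ f : ι → ℝ, Injective f ∧ ∀ i, f i ∈ Ioo (l i) (u i) := by
  obtain ⟨e, he⟩ := Countable.exists_injective_nat ι
  have hq (i : ι) : ∃ q : ℚ, l i - e i * √2 < q ∧ (q : ℝ) < u i - e i * √2 :=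
    exists_rat_btwn (by linarith [hlu i])
  choose q hq using hq
  refine ⟨fun i => q i + e i * √2, fun i j hij => he ?_, fun i => ?_⟩
  · exact irrational_sqrt_two.natCast_eq_of_add_natCast_mul_eq hij
  · exact ⟨by linarith [(hq i).1], by linarith [(hq i).2]⟩

/-- The ends of coordinate `n` of the rational box indexed by `c`. Entries of `c` that do not
describe a subinterval of `[0, 1]`, in particular the zero entries, stand for `(0, 1)`. -/
def ratBox (c : ℕ →₀ ℚ × ℚ) (n : ℕ) : ℝ × ℝ :=
  if 0 ≤ (c n).1 ∧ (c n).1 < (c n).2 ∧ (c n).2 ≤ 1 then ((c n).1, (c n).2) else (0, 1)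

lemma ratBox_bounds (c : ℕ →₀ ℚ × ℚ) (n : ℕ) :
    0 ≤ (ratBox c n).1 ∧ (ratBox c n).1 < (ratBox c n).2 ∧ (ratBox c n).2 ≤ 1 := by
  unfold ratBox
  split_ifs with h
  · dsimp only
    exact_mod_cast h
  · norm_num

lemma exists_ratBox_subset {l u : ℕ → ℝ} (hlu : ∀ n, 0 ≤ l n ∧ l n < u n ∧ u n ≤ 1)
    (hfin : {n | ¬(l n = 0 ∧ u n = 1)}.Finite) :
    ∃ c : ℕ →₀ ℚ × ℚ, ∀ n, l n ≤ (ratBox c n).1 ∧ (ratBox c n).2 ≤ u n := by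
  have hbtwn (n : ℕ) : ∃ p r : ℚ, l n < p ∧ p < r ∧ (r : ℝ) < u n := by
    obtain ⟨p, hlp, hpu⟩ := exists_rat_btwn (hlu n).2.1
    obtain ⟨r, hpr, hru⟩ := exists_rat_btwn hpu
    exact ⟨p, r, hlp, by exact_mod_cast hpr, hru⟩
  choose p r hbtwn using hbtwn
  let g : ℕ → ℚ × ℚ := fun n => if l n = 0 ∧ u n = 1 then 0 else (p n, r n)
  have hg : (support g).Finite := hfin.subset fun n hn hc => hn (if_pos hc)
  refine ⟨Finsupp.ofSupportFinite g hg, fun n => ?_⟩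
  obtain ⟨hl0, -, hu1⟩ := hlu n
  obtain ⟨hlp, hpr, hru⟩ := hbtwn n
  by_cases hc : l n = 0 ∧ u n = 1
  · simp [ratBox, Finsupp.ofSupportFinite_coe, g, hc]
  · have hvalid : 0 ≤ p n ∧ p n < r n ∧ r n ≤ 1 := by
      refine ⟨?_, hpr, ?_⟩
      · exact_mod_cast (hl0.trans hlp.le)
      · exact_mod_cast (hru.trans_le hu1).le
    simp only [ratBox, Finsupp.ofSupportFinite_coe, g, if_neg hc, if_pos hvalid]
    exact ⟨hlp.le, hru.le⟩

theorem stmt5 :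
    ∃ S : Set (ℕ → ℝ),
      (∀ a ∈ S, ∀ n, a n ∈ Set.Ico (0 : ℝ) 1) ∧
      S.Countable ∧ S.Infinite ∧
      (∀ C : Set (ℕ → ℝ), IsCube C → (S ∩ C).Nonempty) ∧
      (∀ a ∈ S, ∀ a' ∈ S, ∀ n n' : ℕ, a n = a' n' → a = a' ∧ n = n') := by
  obtain ⟨f, hf, hmem⟩ := exists_injective_forall_mem_Ioo (ι := (ℕ →₀ ℚ × ℚ) × ℕ)
    fun i => (ratBox_bounds i.1 i.2).2.1
  have hpoint : Injective fun c n => f (c, n) := fun c c' h =>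
    congrArg Prod.fst (hf (congrFun h 0))
  refine ⟨range fun c n => f (c, n), ?_, countable_range _,
    infinite_range_of_injective hpoint, ?_, ?_⟩
  · rintro _ ⟨c, rfl⟩ n
    obtain ⟨h0, -, h1⟩ := ratBox_bounds c n
    exact Ioo_subset_Ico_self (Ioo_subset_Ioo h0 h1 (hmem (c, n)))
  · rintro C ⟨l, u, hlu, hfin, rfl⟩
    obtain ⟨c, hc⟩ := exists_ratBox_subset hlu hfin
    exact ⟨_, ⟨c, rfl⟩, fun n =>
      Ioo_subset_Ico_self (Ioo_subset_Ioo (hc n).1 (hc n).2 (hmem (c, n)))⟩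
  · rintro _ ⟨c, rfl⟩ _ ⟨c', rfl⟩ n n' h
    obtain ⟨rfl, rfl⟩ := Prod.ext_iff.mp (hf h)
    exact ⟨rfl, rfl⟩
end

section
/- For every ε > 0 and every integer k ≥ 1, there exist δ > 0 and an integer n ≥ 1 such that: for every Boolean algebra B, every finitely additive probability measure μ on B, and all elements x₁, …, xₙ ∈ B with μ(xᵢ) ≥ ε for each i, there is a k-element subset I ⊆ {1,…,n} with μ(⨅_{i∈I} xᵢ) ≥ δ. -/
/-- A finitely additive probability measure on a Boolean algebra: `[0,1]`-valued,
`μ ⊤ = 1`, `μ ⊥ = 0`, and additive on disjoint joins. -/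
def IsFinAddProb {B : Type*} [BooleanAlgebra B] (μ : B → ℝ) : Prop :=
  (∀ a, 0 ≤ μ a ∧ μ a ≤ 1) ∧ μ ⊤ = 1 ∧ μ ⊥ = 0 ∧
    ∀ a b : B, a ⊓ b = ⊥ → μ (a ⊔ b) = μ a + μ b

section Aux

variable {B : Type*} [BooleanAlgebra B] {μ : B → ℝ}

lemma IsFinAddProb.mono (h : IsFinAddProb μ) {a b : B} (hab : a ≤ b) : μ a ≤ μ b := by
  have hadd := h.2.2.2 a (b \ a) (by simp)
  rw [sup_sdiff_cancel_right hab] at hadd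
  have := (h.1 (b \ a)).1
  linarith

lemma IsFinAddProb.split (h : IsFinAddProb μ) (a b : B) :
    μ a = μ (a ⊓ b) + μ (a \ b) := by
  have hadd := h.2.2.2 (a ⊓ b) (a \ b) (by simp [inf_inf_sdiff])
  rw [sup_inf_sdiff] at hadd
  exact hadd

lemma IsFinAddProb.subadd (h : IsFinAddProb μ) (a b : B) : μ (a ⊔ b) ≤ μ a + μ b := by
  have hadd := h.2.2.2 a (b \ a) (by simp)
  rw [sup_sdiff_self] at hadd
  have := h.mono (sdiff_le : b \ a ≤ b)
  linarith

lemma IsFinAddProb.sup_le_sum {ι : Type*} (h : IsFinAddProb μ) (s : Finset ι) (f : ι → B) :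
    μ (s.sup f) ≤ ∑ i ∈ s, μ (f i) := by
  induction s using Finset.cons_induction with
  | empty => simp [h.2.2.1]
  | cons a s ha ih =>
      rw [Finset.sup_cons, Finset.sum_cons]
      calc μ (f a ⊔ s.sup f) ≤ μ (f a) + μ (s.sup f) := h.subadd _ _
        _ ≤ μ (f a) + ∑ i ∈ s, μ (f i) := by linarith

lemma IsFinAddProb.pairing (h : IsFinAddProb μ) {ε : ℝ} (hε : 0 < ε) {m : ℕ}
    (hm : 2 / ε < m) (y : ℕ → B) (hy : ∀ j < m, ε ≤ μ (y j)) :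
    ∃ i j, i < j ∧ j < m ∧ ε / (2 * m) ≤ μ (y i ⊓ y j) := by
  have hm0 : 0 < (m : ℝ) := lt_of_le_of_lt (div_nonneg (by norm_num) hε.le) hm
  set s : ℕ → B := fun j => (Finset.range j).sup y with hs
  have step : ∀ j, μ (y j \ s j) = μ (s (j + 1)) - μ (s j) := by
    intro j
    have h1 : s (j + 1) = y j \ s j ⊔ s j := by
      simp only [hs, Finset.range_add_one, Finset.sup_insert]
      rw [sdiff_sup_self]
    have hadd := h.2.2.2 (y j \ s j) (s j) (by simp)
    rw [← h1] at hadd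
    linarith
  have tele : ∑ j ∈ Finset.range m, μ (y j \ s j) ≤ 1 := by
    have := Finset.sum_range_sub (fun j => μ (s j)) m
    calc ∑ j ∈ Finset.range m, μ (y j \ s j)
        = ∑ j ∈ Finset.range m, (μ (s (j + 1)) - μ (s j)) := by
          exact Finset.sum_congr rfl fun j _ => step j
      _ = μ (s m) - μ (s 0) := this
      _ ≤ 1 := by
          have h0 : s 0 = ⊥ := by simp [hs]
          have := (h.1 (s m)).2
          rw [h0, h.2.2.1]; linarith
  -- find j with small increment
  have hexj : ∃ j < m, μ (y j \ s j) < ε / 2 := by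
    by_contra hcon
    push_neg at hcon
    have : (m : ℝ) * (ε / 2) ≤ ∑ j ∈ Finset.range m, μ (y j \ s j) := by
      calc (m : ℝ) * (ε / 2) = ∑ _j ∈ Finset.range m, (ε / 2) := by
            simp [mul_comm]
        _ ≤ _ := Finset.sum_le_sum fun j hj => hcon j (Finset.mem_range.mp hj)
    have h2 : 2 < (m : ℝ) * ε := (div_lt_iff₀ hε).mp hm
    nlinarith
  obtain ⟨j, hjm, hdj⟩ := hexj
  have hj1 : ε / 2 ≤ μ (y j ⊓ s j) := by
    have := h.split (y j) (s j)
    have := hy j hjm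
    linarith
  have hdist : y j ⊓ s j = (Finset.range j).sup fun i => y j ⊓ y i :=
    Finset.sup_inf_distrib_left _ _ _
  have hsum : ε / 2 ≤ ∑ i ∈ Finset.range j, μ (y j ⊓ y i) := by
    calc ε / 2 ≤ μ (y j ⊓ s j) := hj1
      _ = μ ((Finset.range j).sup fun i => y j ⊓ y i) := by rw [hdist]
      _ ≤ _ := h.sup_le_sum _ _
  have hexi : ∃ i ∈ Finset.range j, ε / (2 * m) ≤ μ (y j ⊓ y i) := by
    by_contra hcon
    push_neg at hcon
    have hle : ∑ i ∈ Finset.range j, μ (y j ⊓ y i) ≤ (j : ℝ) * (ε / (2 * m)) := by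
      calc ∑ i ∈ Finset.range j, μ (y j ⊓ y i)
          ≤ ∑ _i ∈ Finset.range j, (ε / (2 * m)) :=
            Finset.sum_le_sum fun i hi => (hcon i hi).le
        _ = (j : ℝ) * (ε / (2 * m)) := by simp [mul_comm]
    have hjlt : (j : ℝ) < m := by exact_mod_cast hjm
    have hpos : 0 < ε / (2 * m) := div_pos hε (by positivity)
    have : (j : ℝ) * (ε / (2 * m)) < (m : ℝ) * (ε / (2 * m)) := by
      -- need j * c < m * c unless j = m; but if j = 0 then sum = 0 < ε/2 already
      exact mul_lt_mul_of_pos_right hjlt hpos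
    have hmm : (m : ℝ) * (ε / (2 * m)) = ε / 2 := by
      field_simp
    linarith
  obtain ⟨i, hi, hmeas⟩ := hexi
  exact ⟨i, j, Finset.mem_range.mp hi, hjm, by rwa [inf_comm]⟩

end Aux

lemma stmt11_aux (ε : ℝ) (hε : 0 < ε) (k : ℕ) (hk : 1 ≤ k) :
    ∃ δ : ℝ, 0 < δ ∧ ∃ n : ℕ, 1 ≤ n ∧
      ∀ (B : Type u) [BooleanAlgebra B] (μ : B → ℝ), IsFinAddProb μ →
        ∀ x : Fin n → B, (∀ i, ε ≤ μ (x i)) →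
          ∃ I : Finset (Fin n), k ≤ I.card ∧ δ ≤ μ (I.inf x) := by
  induction k, hk using Nat.le_induction with
  | base =>
      refine ⟨ε, hε, 1, le_refl 1, fun B _ μ hμ x hx => ⟨{0}, by simp, by simpa using hx 0⟩⟩
  | succ k hk ih =>
      obtain ⟨δ, hδ, n, hn, H⟩ := ih
      set m : ℕ := ⌈2 / δ⌉₊ + 1 with hmdef
      have hm : 2 / δ < (m : ℝ) := by
        calc 2 / δ ≤ (⌈2 / δ⌉₊ : ℝ) := Nat.le_ceil _
          _ < (m : ℝ) := by exact_mod_cast Nat.lt_succ_self _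
      have hm1 : 1 ≤ m := Nat.le_add_left 1 _
      have hmpos : 0 < (m : ℝ) := lt_of_le_of_lt (div_nonneg (by norm_num) hδ.le) hm
      refine ⟨δ / (2 * m), div_pos hδ (by positivity), n * m, Nat.one_le_iff_ne_zero.mpr
        (by positivity), fun B _ μ hμ x hx => ?_⟩
      -- group g consists of indices finProdFinEquiv (i, g), i : Fin n
      set z : Fin m → Fin n → B := fun g i => x (finProdFinEquiv (i, g)) with hz
      have hgroup : ∀ g : Fin m, ∃ I : Finset (Fin n), k ≤ I.card ∧ δ ≤ μ (I.inf (z g)) :=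
        fun g => H B μ hμ (z g) fun i => hx _
      choose I hIcard hIinf using hgroup
      set y : ℕ → B := fun j => if hj : j < m then (I ⟨j, hj⟩).inf (z ⟨j, hj⟩) else ⊤ with hy
      have hy' : ∀ j < m, δ ≤ μ (y j) := by
        intro j hj
        simp only [hy, dif_pos hj]
        exact hIinf ⟨j, hj⟩
      obtain ⟨i, j, hij, hjm, hpair⟩ := hμ.pairing hδ hm y hy'
      set g : Fin m := ⟨i, hij.trans hjm⟩ with hg
      set g' : Fin m := ⟨j, hjm⟩ with hg'
      have hinj : ∀ h : Fin m, Function.Injective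
          (fun p : Fin n => finProdFinEquiv (p, h)) := by
        intro h p q hpq
        have := finProdFinEquiv.injective hpq
        exact (Prod.mk.injEq _ _ _ _).mp this |>.1
      set J : Finset (Fin (n * m)) :=
        (I g).image (fun p => finProdFinEquiv (p, g)) ∪
        (I g').image (fun p => finProdFinEquiv (p, g')) with hJ
      have hdisj : Disjoint ((I g).image (fun p => finProdFinEquiv (p, g)))
          ((I g').image (fun p => finProdFinEquiv (p, g'))) := by
        rw [Finset.disjoint_left]
        intro a ha hb
        simp only [Finset.mem_image] at ha hb
        obtain ⟨p, _, hp⟩ := ha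
        obtain ⟨q, _, hq⟩ := hb
        have : (p, g) = (q, g') := finProdFinEquiv.injective (hp.trans hq.symm)
        have : g = g' := (Prod.mk.injEq _ _ _ _).mp this |>.2
        have : i = j := congrArg Fin.val this
        omega
      refine ⟨J, ?_, ?_⟩
      · rw [hJ, Finset.card_union_of_disjoint hdisj,
          Finset.card_image_of_injective _ (hinj g), Finset.card_image_of_injective _ (hinj g')]
        have := hIcard g
        have := hIcard g'
        omega
      · have hinf : J.inf x = y i ⊓ y j := by
          rw [hJ, Finset.inf_union, Finset.inf_image, Finset.inf_image]
          simp only [hy, dif_pos (hij.trans hjm), dif_pos hjm]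
          rfl
        rw [hinf]
        exact hpair

theorem stmt11 (ε : ℝ) (hε : 0 < ε) (k : ℕ) (hk : 1 ≤ k) :
    ∃ δ : ℝ, 0 < δ ∧ ∃ n : ℕ, 1 ≤ n ∧
      ∀ (B : Type*) [BooleanAlgebra B] (μ : B → ℝ), IsFinAddProb μ →
        ∀ x : Fin n → B, (∀ i, ε ≤ μ (x i)) →
          ∃ I : Finset (Fin n), I.card = k ∧ δ ≤ μ (I.inf x) := by
  obtain ⟨δ, hδ, n, hn, H⟩ := stmt11_aux ε hε k hk
  refine ⟨δ, hδ, n, hn, fun B _ μ hμ x hx => ?_⟩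
  obtain ⟨I, hIcard, hIinf⟩ := H B μ hμ x hx
  obtain ⟨I', hsub, hcard'⟩ := Finset.exists_subset_card_eq hIcard
  exact ⟨I', hcard', hIinf.trans (hμ.mono (Finset.inf_mono hsub))⟩
end

section
/- Let B be a Boolean algebra and F ⊆ B independent. If X, Y ⊆ F are finite and disjoint and X', Y' ⊆ F are finite and disjoint, and ⨅X ⊓ (⨆Y)ᶜ = ⨅X' ⊓ (⨆Y')ᶜ, then X = X' and Y = Y'. -/
/-- An independent subset of a Boolean algebra: for all finite `X, Y ⊆ F`,
if `⨅X ≤ ⨆Y` then `X ∩ Y ≠ ∅` (with `⨅∅ = ⊤` and `⨆∅ = ⊥`). -/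
def IndepFamily {B : Type*} [BooleanAlgebra B] (F : Set B) : Prop :=
  ∀ X Y : Finset B, ↑X ⊆ F → ↑Y ⊆ F → X.inf id ≤ Y.sup id → ∃ x, x ∈ X ∧ x ∈ Y

lemma stmt14_aux {B : Type*} [BooleanAlgebra B] {F : Set B} (hF : IndepFamily F)
    {X Y X' Y' : Finset B} (hX : ↑X ⊆ F) (hY : ↑Y ⊆ F)
    (hX' : ↑X' ⊆ F) (hY' : ↑Y' ⊆ F) (hXY' : Disjoint X' Y')
    (h : X'.inf id ⊓ (Y'.sup id)ᶜ ≤ X.inf id ⊓ (Y.sup id)ᶜ) : X ⊆ X' ∧ Y ⊆ Y' := by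
  classical
  constructor
  · intro x hx
    by_contra hx'
    have h1 : X'.inf id ⊓ (Y'.sup id)ᶜ ≤ x :=
      h.trans (inf_le_left.trans (Finset.inf_le (f := id) hx))
    have h2 : X'.inf id ≤ (insert x Y').sup id := by
      rw [Finset.sup_insert]
      rw [← sdiff_eq] at h1
      exact (sdiff_le_iff.mp h1).trans (by simp [sup_comm])
    obtain ⟨z, hzX', hz⟩ := hF X' (insert x Y') hX'
      (by
        intro a ha
        simp only [Finset.coe_insert, Set.mem_insert_iff] at ha
        rcases ha with rfl | ha
        · exact hX hx
        · exact hY' ha) h2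
    rcases Finset.mem_insert.mp hz with rfl | hz
    · exact hx' hzX'
    · exact absurd rfl (hXY'.forall_ne_finset hzX' hz)
  · intro y hy
    by_contra hy'
    have h1 : X'.inf id ⊓ (Y'.sup id)ᶜ ≤ yᶜ :=
      h.trans (inf_le_right.trans (compl_le_compl (Finset.le_sup (f := id) hy)))
    have h2 : (insert y X').inf id ≤ Y'.sup id := by
      rw [Finset.inf_insert]
      have : y ⊓ (X'.inf id ⊓ (Y'.sup id)ᶜ) ≤ y ⊓ yᶜ :=
        inf_le_inf_left _ h1
      rw [inf_compl_eq_bot] at this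
      have : (y ⊓ X'.inf id) ⊓ (Y'.sup id)ᶜ ≤ ⊥ := by
        rw [inf_assoc]; exact this
      rw [← sdiff_eq] at this
      simpa using sdiff_le_iff.mp this
    obtain ⟨z, hzX, hzY'⟩ := hF (insert y X') Y'
      (by
        intro a ha
        simp only [Finset.coe_insert, Set.mem_insert_iff] at ha
        rcases ha with rfl | ha
        · exact hY hy
        · exact hX' ha) hY' h2
    rcases Finset.mem_insert.mp hzX with rfl | hzX
    · exact hy' hzY'
    · exact absurd rfl (hXY'.forall_ne_finset hzX hzY')

theorem stmt14 {B : Type*} [BooleanAlgebra B] (F : Set B) (hF : IndepFamily F)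
    (X Y X' Y' : Finset B) (hX : ↑X ⊆ F) (hY : ↑Y ⊆ F) (hXY : Disjoint X Y)
    (hX' : ↑X' ⊆ F) (hY' : ↑Y' ⊆ F) (hXY' : Disjoint X' Y')
    (heq : X.inf id ⊓ (Y.sup id)ᶜ = X'.inf id ⊓ (Y'.sup id)ᶜ) :
    X = X' ∧ Y = Y' := by
  obtain ⟨h1, h2⟩ := stmt14_aux hF hX hY hX' hY' hXY' heq.ge
  obtain ⟨h3, h4⟩ := stmt14_aux hF hX' hY' hX hY hXY heq.le
  exact ⟨Finset.Subset.antisymm h1 h3, Finset.Subset.antisymm h2 h4⟩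
end

section
/- Let X be a compact Hausdorff space, μ a regular Borel probability measure on X, and (f_i)_{i∈I} an increasing net of continuous functions f_i : X → [0,1] (i.e., i ≤ j implies f_i ≤ f_j pointwise) converging pointwise to a function f : X → [0,1]. Then f is Borel measurable (indeed lower semicontinuous) and ∫_X f dμ = sup_{i∈I} ∫_X f_i dμ = lim_{i∈I} ∫_X f_i dμ. -/
/-!
The superlevel sets `{t < g}` are directed unions of the open sets `{t < f i}`. A compact subset
of such a union lies in a single member, so inner regularity gives
`μ {t < g} = ⨆ i, μ {t < f i}`: this replaces the countable additivity that a net cannot use.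
Approximating a `[0, 1]`-valued function from below, up to `1 / n`, by the staircase
`n⁻¹ * #{k ∈ [1, n] | k / n < ·}` expresses its integral through finitely many such measures, and
a supremum commutes with a finite sum.
-/

open MeasureTheory Filter Topology
open scoped ENNReal

section Regular

variable {X : Type*} [TopologicalSpace X] [MeasurableSpace X] {μ : Measure X} [μ.Regular]

theorem Directed.measure_iUnion_of_isOpen {ι : Type*} {U : ι → Set X}
    (hd : Directed (· ⊆ ·) U) (hU : ∀ i, IsOpen (U i)) : μ (⋃ i, U i) = ⨆ i, μ (U i) := by
  cases isEmpty_or_nonempty ι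
  · simp
  refine le_antisymm ?_ (iSup_le fun i => measure_mono (Set.subset_iUnion U i))
  rw [(isOpen_iUnion hU).measure_eq_iSup_isCompact]
  refine iSup_le fun K => iSup_le fun hKU => iSup_le fun hK => ?_
  obtain ⟨i, hi⟩ := hK.elim_directed_cover U hU hKU hd
  exact le_iSup_of_le i (measure_mono hi)

theorem Monotone.measure_setOf_lt_iSup {ι : Type*} [Preorder ι] [IsDirectedOrder ι]
    {F : ι → X → ℝ≥0∞} (hmono : Monotone F) (hF : ∀ i, LowerSemicontinuous (F i)) (t : ℝ≥0∞) :
    μ {x | t < ⨆ i, F i x} = ⨆ i, μ {x | t < F i x} := by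
  simp_rw [lt_iSup_iff, Set.ofPred_exists]
  have hsets : Monotone fun i => {x | t < F i x} := fun i j hij x hx => hx.trans_le (hmono hij x)
  exact hsets.directed_le.measure_iUnion_of_isOpen fun i => (hF i).isOpen_preimage t

end Regular

noncomputable def staircase (n : ℕ) (a : ℝ≥0∞) : ℝ≥0∞ :=
  ∑ k ∈ Finset.range n, if ((k + 1 : ℕ) : ℝ≥0∞) / n < a then (n : ℝ≥0∞)⁻¹ else 0

lemma ENNReal.natCast_div_add_inv (m n : ℕ) :
    (m : ℝ≥0∞) / n + (n : ℝ≥0∞)⁻¹ = ((m + 1 : ℕ) : ℝ≥0∞) / n := by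
  rw [← one_div, ENNReal.div_add_div_same, Nat.cast_succ]

lemma staircase_le (n : ℕ) (a : ℝ≥0∞) : staircase n a ≤ a := by
  suffices h : ∀ m, ∑ k ∈ Finset.range m,
      (if ((k + 1 : ℕ) : ℝ≥0∞) / n < a then (n : ℝ≥0∞)⁻¹ else 0) ≤ min a (m / n) from
    (h n).trans (min_le_left _ _)
  intro m
  induction m with
  | zero => simp
  | succ m ih =>
    rw [Finset.sum_range_succ]
    split_ifs with h
    · have : _ ≤ ((m + 1 : ℕ) : ℝ≥0∞) / n :=
        ENNReal.natCast_div_add_inv m n ▸ add_le_add_left (ih.trans (min_le_right _ _)) _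
      exact le_min (this.trans h.le) this
    · rw [add_zero]
      exact ih.trans (min_le_min_left _ (ENNReal.div_le_div_right (by simp) _))

lemma le_inv_add_staircase {n : ℕ} (hn : n ≠ 0) {a : ℝ≥0∞} (ha : a ≤ 1) :
    a ≤ (n : ℝ≥0∞)⁻¹ + staircase n a := by
  suffices h : ∀ m, min a (((m + 1 : ℕ) : ℝ≥0∞) / n) ≤ (n : ℝ≥0∞)⁻¹ + ∑ k ∈ Finset.range m,
      (if ((k + 1 : ℕ) : ℝ≥0∞) / n < a then (n : ℝ≥0∞)⁻¹ else 0) by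
    refine le_trans (le_min le_rfl (ha.trans ?_)) (h n)
    rw [ENNReal.le_div_iff_mul_le (by simp [hn]) (by simp), one_mul]
    exact_mod_cast n.le_succ
  intro m
  induction m with
  | zero => simp [one_div]
  | succ m ih =>
    rw [Finset.sum_range_succ]
    split_ifs with h
    · rw [min_eq_right h.le] at ih
      calc min a _ ≤ ((m + 1 + 1 : ℕ) : ℝ≥0∞) / n := min_le_right _ _
        _ = ((m + 1 : ℕ) : ℝ≥0∞) / n + (n : ℝ≥0∞)⁻¹ := (ENNReal.natCast_div_add_inv _ n).symm
        _ ≤ _ := by rw [← add_assoc]; gcongr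
    · rw [add_zero]
      exact (min_le_left _ _).trans ((le_min le_rfl (not_lt.1 h)).trans ih)

section MonotoneConvergence

variable {X : Type*} [MeasurableSpace X] {μ : Measure X}

lemma lintegral_staircase {G : X → ℝ≥0∞} (hG : Measurable G) (n : ℕ) :
    ∫⁻ x, staircase n (G x) ∂μ =
      ∑ k ∈ Finset.range n, (n : ℝ≥0∞)⁻¹ * μ {x | ((k + 1 : ℕ) : ℝ≥0∞) / n < G x} := by
  have hs : ∀ k : ℕ, MeasurableSet {x | ((k + 1 : ℕ) : ℝ≥0∞) / n < G x} :=
    fun k => measurableSet_lt measurable_const hG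
  have hsum : ∀ x, staircase n (G x) = ∑ k ∈ Finset.range n,
      {x | ((k + 1 : ℕ) : ℝ≥0∞) / n < G x}.indicator (fun _ => (n : ℝ≥0∞)⁻¹) x := fun x => by
    simp only [staircase, Set.indicator_apply, Set.mem_ofPred_eq]
  simp_rw [hsum]
  rw [lintegral_finsetSum _ fun k _ => measurable_const.indicator (hs k)]
  exact Finset.sum_congr rfl fun k _ => lintegral_indicator_const (hs k) _

variable {ι : Type*} [Preorder ι] [IsDirectedOrder ι] {F : ι → X → ℝ≥0∞}

lemma lintegral_iSup_le_inv_mul_add (hF : ∀ i, Measurable (F i)) (hmono : Monotone F)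
    (hG : Measurable fun x => ⨆ i, F i x) (hF1 : ∀ i x, F i x ≤ 1)
    (hlevel : ∀ t, μ {x | t < ⨆ i, F i x} = ⨆ i, μ {x | t < F i x}) {n : ℕ} (hn : n ≠ 0) :
    ∫⁻ x, ⨆ i, F i x ∂μ ≤ (n : ℝ≥0∞)⁻¹ * μ Set.univ + ⨆ i, ∫⁻ x, F i x ∂μ := by
  calc ∫⁻ x, ⨆ i, F i x ∂μ ≤ ∫⁻ x, (n : ℝ≥0∞)⁻¹ + staircase n (⨆ i, F i x) ∂μ :=
        lintegral_mono fun x => le_inv_add_staircase hn (iSup_le fun i => hF1 i x)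
    _ = (n : ℝ≥0∞)⁻¹ * μ Set.univ + ⨆ i, ∫⁻ x, staircase n (F i x) ∂μ := by
        rw [lintegral_add_left measurable_const, lintegral_const, lintegral_staircase hG]
        simp_rw [lintegral_staircase (hF _), hlevel, ENNReal.mul_iSup]
        rw [ENNReal.finsetSum_iSup_of_monotone fun k i j hij => by
          gcongr (n : ℝ≥0∞)⁻¹ * μ ?_
          exact fun x hx => lt_of_lt_of_le hx (hmono hij x)]
    _ ≤ (n : ℝ≥0∞)⁻¹ * μ Set.univ + ⨆ i, ∫⁻ x, F i x ∂μ := by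
        gcongr with i x
        exact staircase_le n _

theorem lintegral_iSup_of_measure_setOf_lt [IsFiniteMeasure μ] (hF : ∀ i, Measurable (F i))
    (hmono : Monotone F) (hG : Measurable fun x => ⨆ i, F i x) (hF1 : ∀ i x, F i x ≤ 1)
    (hlevel : ∀ t, μ {x | t < ⨆ i, F i x} = ⨆ i, μ {x | t < F i x}) :
    ∫⁻ x, ⨆ i, F i x ∂μ = ⨆ i, ∫⁻ x, F i x ∂μ := by
  refine le_antisymm ?_ (iSup_lintegral_le F)
  have hlim : Tendsto (fun n : ℕ => (n : ℝ≥0∞)⁻¹ * μ Set.univ + ⨆ i, ∫⁻ x, F i x ∂μ) atTop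
      (𝓝 (0 * μ Set.univ + ⨆ i, ∫⁻ x, F i x ∂μ)) :=
    (ENNReal.Tendsto.mul_const ENNReal.tendsto_inv_nat_nhds_zero
      (Or.inr (measure_ne_top μ _))).add_const _
  rw [zero_mul, zero_add] at hlim
  exact ge_of_tendsto hlim ((eventually_ne_atTop 0).mono fun n hn =>
    lintegral_iSup_le_inv_mul_add hF hmono hG hF1 hlevel hn)

end MonotoneConvergence

theorem lintegral_iSup_of_lowerSemicontinuous {X : Type*} [TopologicalSpace X]
    [MeasurableSpace X] [OpensMeasurableSpace X] {μ : Measure X} [IsFiniteMeasure μ] [μ.Regular]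
    {ι : Type*} [Preorder ι] [IsDirectedOrder ι] {F : ι → X → ℝ≥0∞}
    (hF : ∀ i, LowerSemicontinuous (F i)) (hmono : Monotone F) (hF1 : ∀ i x, F i x ≤ 1) :
    ∫⁻ x, ⨆ i, F i x ∂μ = ⨆ i, ∫⁻ x, F i x ∂μ :=
  lintegral_iSup_of_measure_setOf_lt (fun i => (hF i).measurable) hmono
    (lowerSemicontinuous_iSup hF).measurable hF1 (hmono.measure_setOf_lt_iSup hF)

section PointwiseLimit

variable {X : Type*} [TopologicalSpace X] {ι : Type*} [Preorder ι] [IsDirectedOrder ι] [Nonempty ι]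

theorem lowerSemicontinuous_of_monotone_tendsto {α : Type*} [LinearOrder α] [TopologicalSpace α]
    [OrderTopology α] {f : ι → X → α} {g : X → α} (hf : ∀ i, LowerSemicontinuous (f i))
    (hmono : Monotone f) (hconv : ∀ x, Tendsto (fun i => f i x) atTop (𝓝 (g x))) :
    LowerSemicontinuous g := by
  intro x y hy
  obtain ⟨i, hi⟩ := ((hconv x).eventually (lt_mem_nhds hy)).exists
  filter_upwards [hf i x y hi] with z hz
  exact hz.trans_le (Monotone.ge_of_tendsto (fun i j hij => hmono hij z) (hconv z) i)

theorem lintegral_ofReal_eq_iSup_of_monotone_tendsto [MeasurableSpace X]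
    [OpensMeasurableSpace X] {μ : Measure X} [IsFiniteMeasure μ] [μ.Regular]
    {f : ι → X → ℝ} {g : X → ℝ} (hf : ∀ i, LowerSemicontinuous (f i)) (hmono : Monotone f)
    (hf1 : ∀ i x, f i x ≤ 1) (hconv : ∀ x, Tendsto (fun i => f i x) atTop (𝓝 (g x))) :
    ∫⁻ x, ENNReal.ofReal (g x) ∂μ = ⨆ i, ∫⁻ x, ENNReal.ofReal (f i x) ∂μ := by
  have hFmono : Monotone fun i x => ENNReal.ofReal (f i x) :=
    fun i j hij x => ENNReal.ofReal_le_ofReal (hmono hij x)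
  have hsup x : ⨆ i, ENNReal.ofReal (f i x) = ENNReal.ofReal (g x) :=
    tendsto_nhds_unique (tendsto_atTop_iSup fun i j hij => hFmono hij x)
      (ENNReal.continuous_ofReal.tendsto _ |>.comp (hconv x))
  simp_rw [← hsup]
  exact lintegral_iSup_of_lowerSemicontinuous
    (fun i => ENNReal.continuous_ofReal.comp_lowerSemicontinuous (hf i)
      fun _ _ => ENNReal.ofReal_le_ofReal) hFmono
    fun i x => ENNReal.ofReal_le_one.2 (hf1 i x)

end PointwiseLimit

theorem stmt16_general {X : Type*} [TopologicalSpace X]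
    [MeasurableSpace X] [BorelSpace X]
    (μ : Measure X) [IsProbabilityMeasure μ] [μ.Regular]
    {I : Type*} [Preorder I] [IsDirected I (· ≤ ·)] [Nonempty I]
    (f : I → X → ℝ) (hcont : ∀ i, Continuous (f i))
    (hrange : ∀ i x, f i x ∈ Set.Icc (0 : ℝ) 1)
    (hmono : ∀ i j, i ≤ j → ∀ x, f i x ≤ f j x)
    (g : X → ℝ)
    (hconv : ∀ x, Tendsto (fun i => f i x) atTop (nhds (g x))) :
    Measurable g ∧ LowerSemicontinuous g ∧
      (∫ x, g x ∂μ = ⨆ i, ∫ x, f i x ∂μ) ∧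
      Tendsto (fun i => ∫ x, f i x ∂μ) atTop (nhds (∫ x, g x ∂μ)) := by
  have hmono' : Monotone f := fun i j hij => hmono i j hij
  have hlsc : LowerSemicontinuous g := lowerSemicontinuous_of_monotone_tendsto
    (fun i => (hcont i).lowerSemicontinuous) hmono' hconv
  set F := fun i => ∫⁻ x, ENNReal.ofReal (f i x) ∂μ
  have hlint : ∫⁻ x, ENNReal.ofReal (g x) ∂μ = ⨆ i, F i :=
    lintegral_ofReal_eq_iSup_of_monotone_tendsto (fun i => (hcont i).lowerSemicontinuous) hmono'
      (fun i x => (hrange i x).2) hconv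
  have hg0 x : 0 ≤ g x :=
    (hrange (Classical.arbitrary I) x).1.trans
      (Monotone.ge_of_tendsto (fun i j hij => hmono i j hij x) (hconv x) _)
  have hint_g : ∫ x, g x ∂μ = (⨆ i, F i).toReal := by
    rw [integral_eq_lintegral_of_nonneg_ae (.of_forall hg0) hlsc.measurable.aestronglyMeasurable,
      hlint]
  have hint_f i : ∫ x, f i x ∂μ = (F i).toReal :=
    integral_eq_lintegral_of_nonneg_ae (.of_forall fun x => (hrange i x).1)
      (hcont i).aestronglyMeasurable
  have hF_le_one i : F i ≤ 1 := by
    simpa using lintegral_mono (μ := μ) fun x => ENNReal.ofReal_le_one.2 (hrange i x).2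
  have hFfin i : F i ≠ ⊤ := ne_top_of_le_ne_top ENNReal.one_ne_top (hF_le_one i)
  have hFmono : Monotone F := fun i j hij =>
    lintegral_mono fun x => ENNReal.ofReal_le_ofReal (hmono i j hij x)
  refine ⟨hlsc.measurable, hlsc, ?_, ?_⟩
  · rw [hint_g, ENNReal.toReal_iSup hFfin]
    simp_rw [hint_f]
  · simp_rw [hint_g, hint_f]
    exact (ENNReal.tendsto_toReal (ne_top_of_le_ne_top ENNReal.one_ne_top (iSup_le hF_le_one))).comp
      (tendsto_atTop_iSup hFmono)

theorem stmt16 {X : Type*} [TopologicalSpace X] [CompactSpace X] [T2Space X]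
    [MeasurableSpace X] [BorelSpace X]
    (μ : Measure X) [IsProbabilityMeasure μ] [μ.Regular]
    {I : Type*} [Preorder I] [IsDirected I (· ≤ ·)] [Nonempty I]
    (f : I → X → ℝ) (hcont : ∀ i, Continuous (f i))
    (hrange : ∀ i x, f i x ∈ Set.Icc (0 : ℝ) 1)
    (hmono : ∀ i j, i ≤ j → ∀ x, f i x ≤ f j x)
    (g : X → ℝ)
    (hconv : ∀ x, Tendsto (fun i => f i x) atTop (nhds (g x))) :
    Measurable g ∧ LowerSemicontinuous g ∧
      (∫ x, g x ∂μ = ⨆ i, ∫ x, f i x ∂μ) ∧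
      Tendsto (fun i => ∫ x, f i x ∂μ) atTop (nhds (∫ x, g x ∂μ)) :=
  stmt16_general μ f hcont hrange hmono g hconv
end
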